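/- arXiv:2405.12733 — 2 statements merged into one kernel-verified Lean document; each statement's English description precedes it below -/
import Mathlib

section
/- For every integer t ≥ 1, the list-distinguishing chromatic number of the path P_{2t+1} on 2t+1 vertices equals 3. -/
open SimpleGraph

/-- `f` is a proper coloring of `G` preserved by no nontrivial automorphism of `G`. -/
def IsProperDistinguishing {V : Type*} (G : SimpleGraph V) (f : V → ℕ) : Prop :=
  (∀ ⦃u w : V⦄, G.Adj u w → f u ≠ f w) ∧
    ∀ φ : G ≃g G, (∀ v, f (φ v) = f v) → ∀ v, φ v = v

/-- `G` is properly `L`-distinguishable for every list assignment with all lists of size `k`. -/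
def ProperlyListDistinguishable {V : Type*} (G : SimpleGraph V) (k : ℕ) : Prop :=
  ∀ L : V → Finset ℕ, (∀ v, (L v).card = k) →
    ∃ f : V → ℕ, (∀ v, f v ∈ L v) ∧ IsProperDistinguishing G f

/-- The list-distinguishing chromatic number `χ_{D_L}(G)`. -/
noncomputable def listDistChromNum {V : Type*} (G : SimpleGraph V) : ℕ :=
  sInf {k | ProperlyListDistinguishable G k}

/-! ### Auxiliary material -/

/-- Pick an element of `s` avoiding `avoid`. -/
noncomputable def pick (s avoid : Finset ℕ) : ℕ :=
  if h : (s \ avoid).Nonempty then h.choose else 0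

lemma pick_spec {s avoid : Finset ℕ} (h : avoid.card < s.card) :
    pick s avoid ∈ s ∧ pick s avoid ∉ avoid := by
  have hne : (s \ avoid).Nonempty := by
    rw [← Finset.card_pos]
    have := Finset.le_card_sdiff avoid s
    omega
  have := hne.choose_spec
  rw [Finset.mem_sdiff] at this
  simpa [pick, hne] using this

/-- Greedy coloring along a path, with the last vertex (index `n-1`) also avoiding the
color `c0` of vertex `0`. -/
noncomputable def greedyAux (M : ℕ → Finset ℕ) (n c0 : ℕ) : ℕ → ℕ
  | 0 => c0
  | (i+1) => pick (M (i+1)) (if i + 2 = n then {greedyAux M n c0 i, c0} else {greedyAux M n c0 i})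

lemma greedyAux_mem (M : ℕ → Finset ℕ) (n c0 : ℕ) (hM : ∀ i, (M i).card = 3) (i : ℕ) :
    greedyAux M n c0 (i+1) ∈ M (i+1) ∧
      greedyAux M n c0 (i+1) ∉
        (if i + 2 = n then ({greedyAux M n c0 i, c0} : Finset ℕ) else {greedyAux M n c0 i}) := by
  rw [greedyAux]
  apply pick_spec
  have h1 : ({greedyAux M n c0 i, c0} : Finset ℕ).card ≤ 2 := by
    apply (Finset.card_insert_le _ _).trans; simp
  have h2 : ({greedyAux M n c0 i} : Finset ℕ).card = 1 := Finset.card_singleton _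
  split <;> rw [hM] <;> omega

lemma greedyAux_step (M : ℕ → Finset ℕ) (n c0 : ℕ) (hM : ∀ i, (M i).card = 3) (i : ℕ) :
    greedyAux M n c0 (i+1) ≠ greedyAux M n c0 i := by
  have := (greedyAux_mem M n c0 hM i).2
  intro h
  apply this
  split <;> simp [h]

lemma greedyAux_last (M : ℕ → Finset ℕ) (n c0 : ℕ) (hM : ∀ i, (M i).card = 3) (i : ℕ)
    (hi : i + 2 = n) : greedyAux M n c0 (i+1) ≠ c0 := by
  have := (greedyAux_mem M n c0 hM i).2
  rw [if_pos hi] at this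
  intro h
  apply this
  simp [h]

/-- Classification of the automorphisms of a path: identity or reversal. -/
lemma path_aut {n : ℕ} (hn : 3 ≤ n) (φ : pathGraph n ≃g pathGraph n) :
    (∀ v : Fin n, φ v = v) ∨ (∀ v : Fin n, (φ v).val = n - 1 - v.val) := by
  classical
  set Φ : ℕ → ℕ := fun i => if h : i < n then (φ ⟨i, h⟩).val else 0 with hΦdef
  have hΦ : ∀ (i : ℕ) (h : i < n), Φ i = (φ ⟨i, h⟩).val := by
    intro i h; simp [hΦdef, h]
  have Φlt : ∀ i, i < n → Φ i < n := by
    intro i h; rw [hΦ i h]; exact (φ ⟨i, h⟩).isLt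
  have Φstep : ∀ i, i + 1 < n → Φ i + 1 = Φ (i+1) ∨ Φ (i+1) + 1 = Φ i := by
    intro i h
    have hadj : (pathGraph n).Adj ⟨i, by omega⟩ ⟨i+1, h⟩ := by
      rw [pathGraph_adj]; left; rfl
    have := (SimpleGraph.Iso.map_adj_iff φ).mpr hadj
    rw [pathGraph_adj] at this
    rw [hΦ i (by omega), hΦ (i+1) h]
    exact this
  have Φinj : ∀ i j, i < n → j < n → Φ i = Φ j → i = j := by
    intro i j hi hj hij
    rw [hΦ i hi, hΦ j hj] at hij
    have h2 : (⟨i, hi⟩ : Fin n) = ⟨j, hj⟩ := φ.toEquiv.injective (Fin.ext hij)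
    simpa using congrArg Fin.val h2
  have key : Φ 0 = 0 ∨ Φ 0 = n - 1 := by
    by_contra hc
    push_neg at hc
    obtain ⟨h1, h2⟩ := hc
    have h0n : (0:ℕ) < n := by omega
    obtain ⟨z, hz⟩ : ∃ z : Fin n, z.val = 0 := ⟨⟨0, h0n⟩, rfl⟩
    set v := Φ 0 with hv
    have hvlt : v < n := Φlt 0 h0n
    have hv1 : 1 ≤ v := by omega
    have hΦ0 : (φ z).val = v := by
      have hz2 : z = ⟨0, h0n⟩ := Fin.ext hz
      rw [hz2]
      exact (hΦ 0 h0n).symm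
    obtain ⟨a, haval⟩ : ∃ a : Fin n, a.val = v - 1 := ⟨⟨v - 1, by omega⟩, rfl⟩
    obtain ⟨b, hbval⟩ : ∃ b : Fin n, b.val = v + 1 := ⟨⟨v + 1, by omega⟩, rfl⟩
    have ha : (pathGraph n).Adj (φ z) a := by rw [pathGraph_adj]; omega
    have hb : (pathGraph n).Adj (φ z) b := by rw [pathGraph_adj]; omega
    have ha' : (pathGraph n).Adj z (φ.symm a) := by
      apply (SimpleGraph.Iso.map_adj_iff φ).mp
      rwa [RelIso.apply_symm_apply]
    have hb' : (pathGraph n).Adj z (φ.symm b) := by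
      apply (SimpleGraph.Iso.map_adj_iff φ).mp
      rwa [RelIso.apply_symm_apply]
    rw [pathGraph_adj] at ha' hb'
    have hae : (φ.symm a).val = 1 := by omega
    have hbe : (φ.symm b).val = 1 := by omega
    have hab : φ.symm a = φ.symm b := Fin.ext (by rw [hae, hbe])
    have hab2 := φ.symm.toEquiv.injective hab
    have := congrArg Fin.val hab2
    omega
  rcases key with h0 | h0
  · left
    have main : ∀ k, k < n → Φ k = k := by
      intro k
      induction k using Nat.strong_induction_on with
      | _ k ih =>
        match k with
        | 0 => intro _; exact h0
        | 1 =>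
          intro h
          have hs : Φ 0 + 1 = Φ 1 ∨ Φ 1 + 1 = Φ 0 := Φstep 0 h
          have := Φlt 1 h
          omega
        | (k+2) =>
          intro h
          have hk1 : Φ (k+1) = k + 1 := ih (k+1) (by omega) (by omega)
          have hk0 : Φ k = k := ih k (by omega) (by omega)
          have hs : Φ (k+1) + 1 = Φ (k+2) ∨ Φ (k+2) + 1 = Φ (k+1) := Φstep (k+1) h
          have hlt := Φlt (k+2) h
          rcases hs with h' | h'
          · omega
          · exfalso
            have : Φ (k+2) = Φ k := by omega
            have := Φinj _ _ h (by omega) this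
            omega
    intro v
    apply Fin.ext
    have := main v.val v.isLt
    rw [hΦ v.val v.isLt] at this
    simpa using this
  · right
    have main : ∀ k, k < n → Φ k = n - 1 - k := by
      intro k
      induction k using Nat.strong_induction_on with
      | _ k ih =>
        match k with
        | 0 => intro _; simpa using h0
        | 1 =>
          intro h
          have hs : Φ 0 + 1 = Φ 1 ∨ Φ 1 + 1 = Φ 0 := Φstep 0 h
          have := Φlt 1 h
          have := Φlt 0 (by omega)
          omega
        | (k+2) =>
          intro h
          have hk1 : Φ (k+1) = n - 1 - (k+1) := ih (k+1) (by omega) (by omega)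
          have hk0 : Φ k = n - 1 - k := ih k (by omega) (by omega)
          have hs : Φ (k+1) + 1 = Φ (k+2) ∨ Φ (k+2) + 1 = Φ (k+1) := Φstep (k+1) h
          have hlt := Φlt (k+2) h
          rcases hs with h' | h'
          · exfalso
            have : Φ (k+2) = Φ k := by omega
            have := Φinj _ _ h (by omega) this
            omega
          · omega
    intro v
    have := main v.val v.isLt
    rw [hΦ v.val v.isLt] at this
    simpa using this

/-- The reversal automorphism of a path. -/
def revIso (n : ℕ) : pathGraph n ≃g pathGraph n where
  toEquiv := Fin.revPerm
  map_rel_iff' := by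
    intro a b
    simp only [Fin.revPerm_apply, pathGraph_adj, Fin.val_rev]
    have := a.isLt
    have := b.isLt
    omega

lemma revIso_val {n : ℕ} (v : Fin n) : ((revIso n) v).val = n - (v.val + 1) :=
  Fin.val_rev v

theorem stmt_1 (t : ℕ) (ht : 1 ≤ t) :
    listDistChromNum (pathGraph (2 * t + 1)) = 3 := by
  classical
  set n := 2 * t + 1 with hn
  have hn3 : 3 ≤ n := by omega
  -- membership : 3 works
  have mem3 : ProperlyListDistinguishable (pathGraph n) 3 := by
    intro L hL
    set M : ℕ → Finset ℕ := fun i => if h : i < n then L ⟨i, h⟩ else {0, 1, 2} with hMdef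
    have hM : ∀ i, (M i).card = 3 := by
      intro i
      by_cases h : i < n <;> simp [hMdef, h, hL]
    set c0 := pick (M 0) ∅ with hc0
    set g := greedyAux M n c0 with hg
    have hg0 : g 0 = c0 := by rw [hg, greedyAux]
    refine ⟨fun v => g v.val, ?_, ?_, ?_⟩
    · intro v
      have hv : g v.val ∈ M v.val := by
        rcases hvv : v.val with _ | i
        · rw [hg0]
          exact (pick_spec (by rw [hM]; simp)).1
        · exact (greedyAux_mem M n c0 hM i).1
      rw [hMdef] at hv
      simp only [v.isLt, dif_pos] at hv
      simpa using hv
    · intro u w huw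
      rw [pathGraph_adj] at huw
      show g u.val ≠ g w.val
      rcases huw with h | h
      · rw [← h]
        exact (greedyAux_step M n c0 hM u.val).symm
      · rw [← h]
        exact (greedyAux_step M n c0 hM w.val)
    · intro φ hφ v
      rcases path_aut hn3 φ with hid | hrev
      · exact hid v
      · exfalso
        have h0n : (0:ℕ) < n := by omega
        have h1 := hφ ⟨0, h0n⟩
        have h2 := hrev ⟨0, h0n⟩
        have hz : ((⟨0, h0n⟩ : Fin n)).val = 0 := rfl
        have hval : (φ (⟨0, h0n⟩ : Fin n)).val = 2 * t := by
          rw [h2, hz]; omega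
        have hlast : g (2 * t) ≠ g 0 := by
          have hi : (2 * t - 1) + 2 = n := by omega
          have := greedyAux_last M n c0 hM (2 * t - 1) hi
          have h2t : 2 * t - 1 + 1 = 2 * t := by omega
          rw [h2t] at this
          rw [hg0]
          exact this
        apply hlast
        rw [← hval]
        exact h1
  -- lower bound : k ≤ 2 fails
  have not2 : ∀ k, ProperlyListDistinguishable (pathGraph n) k → 3 ≤ k := by
    intro k hk
    by_contra hlt
    push_neg at hlt
    interval_cases k
    · obtain ⟨f, hf, _⟩ := hk (fun _ => ∅) (fun _ => rfl)
      simpa using hf ⟨0, by omega⟩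
    · obtain ⟨f, hf, hprop, _⟩ := hk (fun _ => {0}) (fun _ => rfl)
      have hadj : (pathGraph n).Adj ⟨0, by omega⟩ ⟨1, by omega⟩ := by
        rw [pathGraph_adj]; left; rfl
      have hne := hprop hadj
      have h0 := Finset.mem_singleton.mp (hf ⟨0, by omega⟩)
      have h1 := Finset.mem_singleton.mp (hf ⟨1, by omega⟩)
      exact hne (h0.trans h1.symm)
    · obtain ⟨f, hf, hprop, hdist⟩ := hk (fun _ => {0, 1}) (fun _ => rfl)
      set F : ℕ → ℕ := fun i => if h : i < n then f ⟨i, h⟩ else 0 with hFdef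
      have hF : ∀ w : Fin n, F w.val = f w := by
        intro w
        simp [hFdef, w.isLt]
      have FA : ∀ i, i < n → F i = 0 ∨ F i = 1 := by
        intro i h
        have := hf ⟨i, h⟩
        rw [← hF ⟨i, h⟩] at this
        simpa using this
      have FS : ∀ i, i + 1 < n → F i ≠ F (i+1) := by
        intro i h
        have hadj : (pathGraph n).Adj ⟨i, by omega⟩ ⟨i+1, h⟩ := by
          rw [pathGraph_adj]; left; rfl
        have := hprop hadj
        rwa [← hF ⟨i, by omega⟩, ← hF ⟨i+1, h⟩] at this
      have parity : ∀ k, k < n → (k % 2 = 0 → F k = F 0) ∧ (k % 2 = 1 → F k = F 1) := by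
        intro k
        induction k with
        | zero => intro _; exact ⟨fun _ => rfl, by omega⟩
        | succ k ih =>
          intro h
          obtain ⟨ih0, ih1⟩ := ih (by omega)
          have hs := FS k h
          have m0 := FA 0 (by omega)
          have m1 := FA 1 (by omega)
          have mk := FA k (by omega)
          have mk1 := FA (k+1) h
          have h01 : F 0 ≠ F 1 := by simpa using FS 0 (by omega)
          constructor
          · intro hpar
            have := ih1 (by omega)
            omega
          · intro hpar
            have := ih0 (by omega)
            omega
      have hpres : ∀ v : Fin n, f (revIso n v) = f v := by
        intro v
        have hval : ((revIso n) v).val = n - (v.val + 1) := revIso_val v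
        have hv := v.isLt
        rw [← hF ((revIso n) v), ← hF v]
        obtain ⟨p0, p1⟩ := parity v.val v.isLt
        obtain ⟨q0, q1⟩ := parity ((revIso n) v).val ((revIso n) v).isLt
        rw [hval] at q0 q1
        rcases Nat.even_or_odd v.val with he | ho
        · rw [Nat.even_iff] at he
          rw [p0 he, hval, q0 (by omega)]
        · rw [Nat.odd_iff] at ho
          rw [p1 ho, hval, q1 (by omega)]
      have h0n : (0:ℕ) < n := by omega
      have := hdist (revIso n) hpres ⟨0, h0n⟩
      have heq := congrArg Fin.val this
      rw [revIso_val] at heq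
      have hz : ((⟨0, h0n⟩ : Fin n)).val = 0 := rfl
      rw [hz] at heq
      omega
  rw [listDistChromNum]
  apply le_antisymm
  · exact Nat.sInf_le mem3
  · exact le_csInf ⟨3, mem3⟩ not2
end

section
/- For every n ≥ 2, the list-distinguishing chromatic number of the book graph B_n equals its distinguishing chromatic number: χ_{D_L}(B_n) = χ_D(B_n). -/
open SimpleGraph

/-- The distinguishing chromatic number `χ_D(G)`: the least `r` such that `G` has a proper
coloring with `r` colors preserved by no nontrivial automorphism. -/
noncomputable def distChromNum {V : Type*} (G : SimpleGraph V) : ℕ :=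
  sInf {r | ∃ f : V → Fin r, (∀ ⦃u w : V⦄, G.Adj u w → f u ≠ f w) ∧
    ∀ φ : G ≃g G, (∀ v, f (φ v) = f v) → ∀ v, φ v = v}

/-- The book graph `B_n`: the Cartesian (box) product of the star `K_{1,n}` and `P_2`. -/
def bookGraph (n : ℕ) : SimpleGraph ((Fin 1 ⊕ Fin n) × Fin 2) :=
  completeBipartiteGraph (Fin 1) (Fin n) □ pathGraph 2


/-! ### Auxiliary material for `stmt_18` -/

section BookAux

open Finset

lemma fin2 (s : Fin 2) : s = 0 ∨ s = 1 := by revert s; decide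

lemma book_adj {n : ℕ} (p q : (Fin 1 ⊕ Fin n) × Fin 2) :
    (bookGraph n).Adj p q ↔
      ((p.1.isLeft ∧ q.1.isRight ∨ p.1.isRight ∧ q.1.isLeft) ∧ p.2 = q.2) ∨
       (p.2 ≠ q.2 ∧ p.1 = q.1) := by
  rw [show bookGraph n = completeBipartiteGraph (Fin 1) (Fin n) □ ⊤ by
    rw [bookGraph, pathGraph_two_eq_top]]
  simp [boxProd_adj]

/-- The automorphism of the book graph swapping pages `i` and `j`. -/
def pageSwap {n : ℕ} (i j : Fin n) : bookGraph n ≃g bookGraph n where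
  toEquiv := Equiv.prodCongr (Equiv.sumCongr (Equiv.refl (Fin 1)) (Equiv.swap i j))
    (Equiv.refl (Fin 2))
  map_rel_iff' := by
    rintro ⟨x, s⟩ ⟨y, t⟩
    simp only [book_adj, Equiv.prodCongr_apply, Equiv.coe_refl, Prod.map]
    cases x <;> cases y <;>
      simp [Equiv.swap_apply_def] <;> aesop

@[simp] lemma pageSwap_inr {n : ℕ} (i j k : Fin n) (s : Fin 2) :
    pageSwap i j (Sum.inr k, s) = (Sum.inr (Equiv.swap i j k), s) := rfl

@[simp] lemma pageSwap_inl {n : ℕ} (i j : Fin n) (z : Fin 1) (s : Fin 2) :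
    pageSwap i j (Sum.inl z, s) = (Sum.inl z, s) := rfl

end BookAux

section PairAux
open Finset
variable {α : Type*} [DecidableEq α]

/-- The set of admissible color pairs for a page, given center colors `a`, `b`. -/
def pairSet (A B : Finset α) (a b : α) : Finset (α × α) :=
  ((A.erase a) ×ˢ (B.erase b)).filter fun p => p.1 ≠ p.2

lemma mem_pairSet {A B : Finset α} {a b : α} {p : α × α} :
    p ∈ pairSet A B a b ↔ (p.1 ∈ A ∧ p.1 ≠ a) ∧ (p.2 ∈ B ∧ p.2 ≠ b) ∧ p.1 ≠ p.2 := by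
  simp [pairSet, Finset.mem_filter, Finset.mem_product, Finset.mem_erase]
  tauto

lemma pairSet_card (A B : Finset α) (a b : α) :
    (pairSet A B a b).card + ((A.erase a) ∩ (B.erase b)).card
      = (A.erase a).card * (B.erase b).card := by
  classical
  have h1 := Finset.card_filter_add_card_filter_not
    (s := (A.erase a) ×ˢ (B.erase b)) (p := fun p => p.1 ≠ p.2)
  have h2 : ((A.erase a) ×ˢ (B.erase b)).filter (fun p => ¬ p.1 ≠ p.2)
      = ((A.erase a) ∩ (B.erase b)).image (fun x => (x, x)) := by
    ext ⟨x, y⟩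
    simp only [Finset.mem_filter, Finset.mem_product, Finset.mem_image, Finset.mem_inter,
      not_not, Prod.mk.injEq]
    constructor
    · rintro ⟨⟨h1, h2⟩, rfl⟩; exact ⟨x, ⟨h1, h2⟩, rfl, rfl⟩
    · rintro ⟨z, ⟨h1, h2⟩, rfl, rfl⟩; exact ⟨⟨h1, h2⟩, rfl⟩
  have h3 : (((A.erase a) ∩ (B.erase b)).image (fun x => (x, x))).card
      = ((A.erase a) ∩ (B.erase b)).card :=
    Finset.card_image_of_injective _ (fun x y h => (Prod.mk.injEq _ _ _ _).mp h |>.1)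
  rw [h2, h3, Finset.card_product] at h1
  exact h1

lemma pairSet_card_lower {k : ℕ} {A B : Finset α} {a b : α}
    (hA : A.card = k + 2) (hB : B.card = k + 2) :
    (k + 1) * k ≤ (pairSet A B a b).card := by
  have e := pairSet_card A B a b
  have c1l : k + 1 ≤ (A.erase a).card := by
    have := Finset.pred_card_le_card_erase (s := A) (a := a); omega
  have c2l : k + 1 ≤ (B.erase b).card := by
    have := Finset.pred_card_le_card_erase (s := B) (a := b); omega
  have cIl : ((A.erase a) ∩ (B.erase b)).card ≤ (A.erase a).card :=
    Finset.card_le_card Finset.inter_subset_left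
  nlinarith [e, c1l, c2l, cIl]

lemma pairSet_tight {k : ℕ} {A B : Finset α} {a b : α} (hk : 1 ≤ k)
    (hA : A.card = k + 2) (hB : B.card = k + 2)
    (h : (pairSet A B a b).card ≤ (k + 1) * k) :
    a ∈ A ∧ A.erase a = B.erase b := by
  have e := pairSet_card A B a b
  have c1l : k + 1 ≤ (A.erase a).card := by
    have := Finset.pred_card_le_card_erase (s := A) (a := a); omega
  have c2l : k + 1 ≤ (B.erase b).card := by
    have := Finset.pred_card_le_card_erase (s := B) (a := b); omega
  have c1u : (A.erase a).card ≤ k + 2 := hA ▸ Finset.card_erase_le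
  have c2u : (B.erase b).card ≤ k + 2 := hB ▸ Finset.card_erase_le
  have cI1 : ((A.erase a) ∩ (B.erase b)).card ≤ (A.erase a).card :=
    Finset.card_le_card Finset.inter_subset_left
  have cI2 : ((A.erase a) ∩ (B.erase b)).card ≤ (B.erase b).card :=
    Finset.card_le_card Finset.inter_subset_right
  -- force all cards
  have hc1 : (A.erase a).card = k + 1 := by
    rcases Nat.lt_or_ge (A.erase a).card (k + 2) with h' | h'
    · omega
    · exfalso; nlinarith
  have hc2 : (B.erase b).card = k + 1 := by
    rcases Nat.lt_or_ge (B.erase b).card (k + 2) with h' | h'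
    · omega
    · exfalso; nlinarith
  have hcI : ((A.erase a) ∩ (B.erase b)).card = k + 1 := by
    rw [hc1, hc2] at e
    have : (k + 1) * (k + 1) = (k + 1) * k + (k + 1) := by ring
    omega
  have ha : a ∈ A := by
    by_contra ha
    rw [Finset.erase_eq_of_notMem ha] at hc1
    omega
  have h4 : (A.erase a) ∩ (B.erase b) = A.erase a :=
    Finset.eq_of_subset_of_card_le Finset.inter_subset_left (by omega)
  have h5 : (A.erase a) ∩ (B.erase b) = B.erase b :=
    Finset.eq_of_subset_of_card_le Finset.inter_subset_right (by omega)
  exact ⟨ha, by rw [← h4, h5]⟩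


end PairAux

section MainAux
open Finset
lemma nbr_page {n : ℕ} (i : Fin n) (s : Fin 2) (u : (Fin 1 ⊕ Fin n) × Fin 2)
    (h : (bookGraph n).Adj (Sum.inr i, s) u) :
    u = (Sum.inl 0, s) ∨ u = (Sum.inr i, 1 - s) := by
  obtain ⟨u1, u2⟩ := u
  rw [book_adj] at h
  rcases h with ⟨h1, h2⟩ | ⟨h1, h2⟩
  · left
    simp only at h1 h2
    subst h2
    rcases h1 with ⟨hl, _⟩ | ⟨_, hl⟩
    · simp at hl
    · cases u1 with
      | inl z => exact congrArg (fun x => ((Sum.inl x : Fin 1 ⊕ Fin n), s)) (Subsingleton.elim z 0)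
      | inr _ => simp at hl
  · right
    simp only at h1 h2
    rw [← h2]
    have : u2 = 1 - s := by revert h1; fin_cases s <;> fin_cases u2 <;> decide
    rw [this]

lemma nbr_center {n : ℕ} (s : Fin 2) (u : (Fin 1 ⊕ Fin n) × Fin 2)
    (h : (bookGraph n).Adj (Sum.inl 0, s) u) :
    u = (Sum.inl 0, 1 - s) ∨ ∃ j, u = (Sum.inr j, s) := by
  obtain ⟨u1, u2⟩ := u
  rw [book_adj] at h
  rcases h with ⟨h1, h2⟩ | ⟨h1, h2⟩
  · right
    simp only at h1 h2
    subst h2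
    rcases h1 with ⟨_, hr⟩ | ⟨hl, _⟩
    · cases u1 with
      | inl z => simp at hr
      | inr j => exact ⟨j, rfl⟩
    · simp at hl
  · left
    simp only at h1 h2
    rw [← h2]
    have : u2 = 1 - s := by revert h1; fin_cases s <;> fin_cases u2 <;> decide
    rw [this]

lemma adj_cc {n : ℕ} (s t : Fin 2) (hst : s ≠ t) :
    (bookGraph n).Adj (Sum.inl 0, s) (Sum.inl 0, t) := by
  rw [book_adj]; right; exact ⟨hst, rfl⟩

lemma adj_cp {n : ℕ} (i : Fin n) (s : Fin 2) :
    (bookGraph n).Adj (Sum.inl 0, s) (Sum.inr i, s) := by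
  rw [book_adj]; left; exact ⟨Or.inl ⟨rfl, rfl⟩, rfl⟩

lemma adj_pp {n : ℕ} (i : Fin n) (s t : Fin 2) (hst : s ≠ t) :
    (bookGraph n).Adj (Sum.inr i, s) (Sum.inr i, t) := by
  rw [book_adj]; right; exact ⟨hst, rfl⟩

lemma distinguishing_of {n : ℕ} (hn : 2 ≤ n) (f : (Fin 1 ⊕ Fin n) × Fin 2 → ℕ)
    (hp : ∀ ⦃u w : (Fin 1 ⊕ Fin n) × Fin 2⦄, (bookGraph n).Adj u w → f u ≠ f w)
    (hinj : ∀ i j : Fin n, f (Sum.inr i, 0) = f (Sum.inr j, 0) →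
        f (Sum.inr i, 1) = f (Sum.inr j, 1) → i = j) :
    IsProperDistinguishing (bookGraph n) f := by
  refine ⟨hp, ?_⟩
  intro φ hf
  -- the "three distinct neighbors" property
  let A : (Fin 1 ⊕ Fin n) × Fin 2 → Prop := fun u =>
    ∃ x y z, x ≠ y ∧ x ≠ z ∧ y ≠ z ∧ (bookGraph n).Adj u x ∧ (bookGraph n).Adj u y ∧
      (bookGraph n).Adj u z
  have hA_center : ∀ s : Fin 2, A (Sum.inl 0, s) := by
    intro s
    refine ⟨(Sum.inl 0, 1 - s), (Sum.inr (⟨0, by omega⟩ : Fin n), s),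
      (Sum.inr (⟨1, by omega⟩ : Fin n), s),
      ?_, ?_, ?_, adj_cc s (1 - s) (by fin_cases s <;> decide),
      adj_cp _ s, adj_cp _ s⟩
    · simp
    · simp
    · simp [Fin.ext_iff]
  have hA_page : ∀ (i : Fin n) (s : Fin 2), ¬ A (Sum.inr i, s) := by
    rintro i s ⟨x, y, z, hxy, hxz, hyz, hx, hy, hz⟩
    rcases nbr_page i s x hx with rfl | rfl <;>
      rcases nbr_page i s y hy with rfl | rfl <;>
      rcases nbr_page i s z hz with rfl | rfl <;>
      first | exact hxy rfl | exact hxz rfl | exact hyz rfl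
  have hφA : ∀ u, A u → A (φ u) := by
    rintro u ⟨x, y, z, hxy, hxz, hyz, hx, hy, hz⟩
    exact ⟨φ x, φ y, φ z, fun h => hxy (φ.toEquiv.injective h),
      fun h => hxz (φ.toEquiv.injective h), fun h => hyz (φ.toEquiv.injective h),
      φ.map_adj_iff.mpr hx, φ.map_adj_iff.mpr hy, φ.map_adj_iff.mpr hz⟩
  -- centers go to centers
  have hcc : ∀ s : Fin 2, ∃ t, φ (Sum.inl 0, s) = (Sum.inl 0, t) := by
    intro s
    have h := hφA _ (hA_center s)
    rcases hu : φ (Sum.inl 0, s) with ⟨u1, u2⟩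
    rw [hu] at h
    cases u1 with
    | inl z => exact ⟨u2, by rw [Subsingleton.elim z (0 : Fin 1)]⟩
    | inr j => exact absurd h (hA_page j u2)
  have hfix0 : ∀ s : Fin 2, φ (Sum.inl 0, s) = (Sum.inl 0, s) := by
    intro s
    obtain ⟨t, ht⟩ := hcc s
    rcases eq_or_ne t s with rfl | hts
    · exact ht
    · exfalso
      have h1 := hf (Sum.inl 0, s)
      rw [ht] at h1
      exact hp (adj_cc s t (Ne.symm hts)) h1.symm
  -- pages go to pages, same page by colors
  have hfixp : ∀ (i : Fin n) (s : Fin 2), ∃ j, φ (Sum.inr i, s) = (Sum.inr j, s) := by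
    intro i s
    have hadj : (bookGraph n).Adj (Sum.inl 0, s) (φ (Sum.inr i, s)) := by
      have := φ.map_adj_iff.mpr (adj_cp i s)
      rwa [hfix0 s] at this
    rcases nbr_center s _ hadj with h | ⟨j, hj⟩
    · exfalso
      have : φ (Sum.inr i, s) = φ (Sum.inl 0, 1 - s) := by rw [h, hfix0]
      have := φ.toEquiv.injective this
      simp at this
    · exact ⟨j, hj⟩
  have hfixpage : ∀ (i : Fin n) (s : Fin 2), φ (Sum.inr i, s) = (Sum.inr i, s) := by
    intro i s
    obtain ⟨j, hj⟩ := hfixp i 0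
    obtain ⟨k, hk⟩ := hfixp i 1
    have hadj : (bookGraph n).Adj (Sum.inr j, (0 : Fin 2)) (Sum.inr k, 1) := by
      have := φ.map_adj_iff.mpr (adj_pp i 0 1 (by decide))
      rwa [hj, hk] at this
    have hjk : k = j := by
      rcases nbr_page j 0 _ hadj with h | h
      · simp at h
      · simp only [Prod.mk.injEq, Sum.inr.injEq] at h
        exact h.1
    subst hjk
    have h1 : f (Sum.inr k, (0 : Fin 2)) = f (Sum.inr i, 0) := by rw [← hj, hf]
    have h2 : f (Sum.inr k, (1 : Fin 2)) = f (Sum.inr i, 1) := by rw [← hk, hf]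
    have : k = i := hinj k i h1 h2
    subst this
    fin_cases s
    · exact hj
    · exact hk
  rintro ⟨x, s⟩
  cases x with
  | inl z => rw [Subsingleton.elim z 0]; exact hfix0 s
  | inr i => exact hfixpage i s

lemma dist_bounds {n r : ℕ} (hn : 2 ≤ n)
    (f : (Fin 1 ⊕ Fin n) × Fin 2 → Fin r)
    (hp : ∀ ⦃u w : (Fin 1 ⊕ Fin n) × Fin 2⦄, (bookGraph n).Adj u w → f u ≠ f w)
    (hd : ∀ φ : bookGraph n ≃g bookGraph n, (∀ v, f (φ v) = f v) → ∀ v, φ v = v) :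
    3 ≤ r ∧ n ≤ (r - 1) * (r - 2) + 1 := by
  classical
  set a : Fin r := f (Sum.inl 0, 0) with ha
  set b : Fin r := f (Sum.inl 0, 1) with hb
  have hab : a ≠ b := hp (adj_cc 0 1 (by decide))
  have hr2 : 2 ≤ r := by
    have h1 := a.isLt
    have h2 := b.isLt
    have h3 : a.val ≠ b.val := fun h => hab (Fin.ext h)
    omega
  -- the page color pairs are injective
  have hinj : ∀ i j : Fin n, f (Sum.inr i, 0) = f (Sum.inr j, 0) →
      f (Sum.inr i, 1) = f (Sum.inr j, 1) → i = j := by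
    intro i j h1 h2
    have hps : ∀ s : Fin 2, f (Sum.inr i, s) = f (Sum.inr j, s) := by
      intro s
      fin_cases s
      · exact h1
      · exact h2
    have hpre : ∀ v, f (pageSwap i j v) = f v := by
      rintro ⟨x, s⟩
      cases x with
      | inl z => rfl
      | inr m =>
        rw [pageSwap_inr]
        rcases eq_or_ne m i with rfl | hmi
        · rw [Equiv.swap_apply_left]
          exact (hps s).symm
        · rcases eq_or_ne m j with rfl | hmj
          · rw [Equiv.swap_apply_right]
            exact hps s
          · rw [Equiv.swap_apply_of_ne_of_ne hmi hmj]
    have := hd (pageSwap i j) hpre (Sum.inr i, 0)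
    rw [pageSwap_inr, Equiv.swap_apply_left] at this
    have := (Prod.mk.injEq _ _ _ _).mp this
    exact ((Sum.inr.injEq _ _).mp this.1).symm
  -- count
  set T : Finset (Fin r × Fin r) := pairSet Finset.univ Finset.univ a b with hT
  have hmemT : ∀ i : Fin n, (f (Sum.inr i, 0), f (Sum.inr i, 1)) ∈ T := by
    intro i
    rw [hT, mem_pairSet]
    refine ⟨⟨Finset.mem_univ _, ?_⟩, ⟨Finset.mem_univ _, ?_⟩, ?_⟩
    · exact Ne.symm (hp (adj_cp i 0))
    · exact Ne.symm (hp (adj_cp i 1))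
    · exact hp (adj_pp i 0 1 (by decide))
  have hcard : n ≤ T.card := by
    have := Finset.card_le_card_of_injOn
      (s := (Finset.univ : Finset (Fin n))) (t := T)
      (f := fun i : Fin n => (f (Sum.inr i, 0), f (Sum.inr i, 1)))
      (fun i _ => hmemT i)
      (fun i _ j _ h => by
        have h' := (Prod.mk.injEq _ _ _ _).mp h
        exact hinj i j h'.1 h'.2)
    simpa using this
  have hTcard : T.card + (r - 2) = (r - 1) * (r - 1) := by
    have e := pairSet_card (Finset.univ : Finset (Fin r)) Finset.univ a b
    have c1 : (Finset.univ.erase a).card = r - 1 := by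
      rw [Finset.card_erase_of_mem (Finset.mem_univ a)]
      simp
    have c2 : (Finset.univ.erase b).card = r - 1 := by
      rw [Finset.card_erase_of_mem (Finset.mem_univ b)]
      simp
    have hI : (Finset.univ.erase a) ∩ (Finset.univ.erase b) = (Finset.univ.erase a).erase b := by
      ext x
      simp only [Finset.mem_inter, Finset.mem_erase, Finset.mem_univ, and_true]
      tauto
    have cI : ((Finset.univ.erase a) ∩ (Finset.univ.erase b)).card = r - 2 := by
      rw [hI, Finset.card_erase_of_mem (Finset.mem_erase.mpr ⟨hab.symm, Finset.mem_univ b⟩), c1]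
      omega
    rw [c1, c2, cI] at e
    exact e
  have hr3 : 3 ≤ r := by
    by_contra h
    have : r = 2 := by omega
    subst this
    omega
  refine ⟨hr3, ?_⟩
  obtain ⟨m, rfl⟩ : ∃ m, r = m + 3 := ⟨r - 3, by omega⟩
  have h2' : m + 3 - 1 = m + 2 := by omega
  have h3' : m + 3 - 2 = m + 1 := by omega
  have : (m + 3 - 1) * (m + 3 - 1) = (m + 3 - 1) * (m + 3 - 2) + (m + 3 - 1) := by
    rw [h2', h3']; ring
  omega

lemma construct {n r : ℕ} (hn : 2 ≤ n) (h3 : 3 ≤ r) (hnr : n ≤ (r - 1) * (r - 2) + 1) :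
    ProperlyListDistinguishable (bookGraph n) r := by
  classical
  obtain ⟨k, rfl⟩ : ∃ k, r = k + 2 := ⟨r - 2, by omega⟩
  have hk : 1 ≤ k := by omega
  have hnr' : n ≤ (k + 1) * k + 1 := by
    have e1 : k + 2 - 1 = k + 1 := by omega
    have e2 : k + 2 - 2 = k := by omega
    rwa [e1, e2] at hnr
  intro L hL
  have hi0lt : 0 < n := by omega
  set i0 : Fin n := ⟨0, hi0lt⟩ with hi0
  obtain ⟨b, hb⟩ : (L (Sum.inl 0, 1)).Nonempty := Finset.card_pos.mp (by rw [hL]; omega)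
  have hA2 : 1 < ((L (Sum.inl 0, 0)).erase b).card := by
    have h1 := Finset.pred_card_le_card_erase (s := L (Sum.inl 0, 0)) (a := b)
    rw [hL] at h1
    omega
  obtain ⟨a1, ha1, a2, ha2, ha12⟩ := Finset.one_lt_card.mp hA2
  set S : ℕ → Fin n → Finset (ℕ × ℕ) := fun a i =>
    pairSet (L (Sum.inr i, 0)) (L (Sum.inr i, 1)) a b with hS
  have hgood : ∃ a ∈ (L (Sum.inl 0, 0)).erase b, (k + 1) * k + 1 ≤ (S a i0).card := by
    by_contra hcon
    push_neg at hcon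
    have t1 := pairSet_tight (A := L (Sum.inr i0, 0)) (B := L (Sum.inr i0, 1)) (a := a1) (b := b)
      hk (hL _) (hL _) (by have := hcon a1 ha1; simp only [hS] at this; omega)
    have t2 := pairSet_tight (A := L (Sum.inr i0, 0)) (B := L (Sum.inr i0, 1)) (a := a2) (b := b)
      hk (hL _) (hL _) (by have := hcon a2 ha2; simp only [hS] at this; omega)
    have he : (L (Sum.inr i0, 0)).erase a1 = (L (Sum.inr i0, 0)).erase a2 := by
      rw [t1.2, t2.2]
    have hmm : a1 ∈ (L (Sum.inr i0, 0)).erase a2 := Finset.mem_erase.mpr ⟨ha12, t1.1⟩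
    rw [← he] at hmm
    exact (Finset.mem_erase.mp hmm).1 rfl
  obtain ⟨a, haa, hgooda⟩ := hgood
  have hmem_a : a ∈ L (Sum.inl 0, 0) := (Finset.mem_erase.mp haa).2
  have hab : a ≠ b := (Finset.mem_erase.mp haa).1
  have hlow : ∀ i, (k + 1) * k ≤ (S a i).card := fun i => pairSet_card_lower (hL _) (hL _)
  have hall : ∀ s : Finset (Fin n), s.card ≤ (s.biUnion (S a)).card := by
    intro s
    rcases s.eq_empty_or_nonempty with rfl | ⟨i, hi⟩
    · simp
    by_cases hcardn : s.card = n
    · have hsu : s = Finset.univ := Finset.eq_univ_of_card s (by rw [hcardn]; simp)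
      have hsub : S a i0 ⊆ s.biUnion (S a) :=
        Finset.subset_biUnion_of_mem (S a) (hsu ▸ Finset.mem_univ i0)
      have := Finset.card_le_card hsub
      omega
    · have h1 : s.card ≤ n := by
        have := Finset.card_le_univ s
        simpa using this
      have hsub : S a i ⊆ s.biUnion (S a) := Finset.subset_biUnion_of_mem (S a) hi
      have h2 := Finset.card_le_card hsub
      have h3 := hlow i
      omega
  obtain ⟨g, hginj, hg⟩ := (Finset.all_card_le_biUnion_card_iff_exists_injective (S a)).mp hall
  have hg' : ∀ i, ((g i).1 ∈ L (Sum.inr i, 0) ∧ (g i).1 ≠ a) ∧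
      ((g i).2 ∈ L (Sum.inr i, 1) ∧ (g i).2 ≠ b) ∧ (g i).1 ≠ (g i).2 :=
    fun i => mem_pairSet.mp (hg i)
  set F : (Fin 1 ⊕ Fin n) × Fin 2 → ℕ := fun u =>
    Sum.elim (fun _ => if u.2 = 0 then a else b)
      (fun i => if u.2 = 0 then (g i).1 else (g i).2) u.1 with hF
  have hFc0 : ∀ z : Fin 1, F (Sum.inl z, 0) = a := fun _ => rfl
  have hFc1 : ∀ z : Fin 1, F (Sum.inl z, 1) = b := fun _ => rfl
  have hFp0 : ∀ i : Fin n, F (Sum.inr i, 0) = (g i).1 := fun i => rfl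
  have hFp1 : ∀ i : Fin n, F (Sum.inr i, 1) = (g i).2 := fun i => rfl
  have hproper : ∀ ⦃u w : (Fin 1 ⊕ Fin n) × Fin 2⦄, (bookGraph n).Adj u w → F u ≠ F w := by
    rintro ⟨x, s⟩ ⟨y, t⟩ hadj
    rw [book_adj] at hadj
    rcases hadj with ⟨hbp, hst⟩ | ⟨hst, hxy⟩
    · simp only at hst
      subst hst
      rcases hbp with ⟨hxl, hyr⟩ | ⟨hxr, hyl⟩
      · cases x with
        | inr _ => simp at hxl
        | inl z =>
          cases y with
          | inl _ => simp at hyr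
          | inr j =>
            rcases fin2 s with rfl | rfl
            · rw [hFc0, hFp0]
              exact Ne.symm (hg' j).1.2
            · rw [hFc1, hFp1]
              exact Ne.symm (hg' j).2.1.2
      · cases x with
        | inl _ => simp at hxr
        | inr i =>
          cases y with
          | inr _ => simp at hyl
          | inl z =>
            rcases fin2 s with rfl | rfl
            · rw [hFp0, hFc0]
              exact (hg' i).1.2
            · rw [hFp1, hFc1]
              exact (hg' i).2.1.2
    · simp only at hst hxy
      subst hxy
      cases x with
      | inl z =>
        rcases fin2 s with rfl | rfl <;> rcases fin2 t with rfl | rfl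
        · exact absurd rfl hst
        · rw [hFc0, hFc1]; exact hab
        · rw [hFc1, hFc0]; exact Ne.symm hab
        · exact absurd rfl hst
      | inr i =>
        rcases fin2 s with rfl | rfl <;> rcases fin2 t with rfl | rfl
        · exact absurd rfl hst
        · rw [hFp0, hFp1]; exact (hg' i).2.2
        · rw [hFp1, hFp0]; exact Ne.symm (hg' i).2.2
        · exact absurd rfl hst
  refine ⟨F, ?_, hproper, ?_⟩
  · rintro ⟨x, s⟩
    cases x with
    | inl z =>
      rw [Subsingleton.elim z (0 : Fin 1)]
      rcases fin2 s with rfl | rfl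
      · rw [hFc0]; exact hmem_a
      · rw [hFc1]; exact hb
    | inr i =>
      rcases fin2 s with rfl | rfl
      · rw [hFp0]; exact (hg' i).1.1
      · rw [hFp1]; exact (hg' i).2.1.1
  · exact (distinguishing_of hn F hproper (by
      intro i j h1 h2
      rw [hFp0, hFp0] at h1
      rw [hFp1, hFp1] at h2
      exact hginj (Prod.ext h1 h2))).2

end MainAux

theorem stmt_18 (n : ℕ) (hn : 2 ≤ n) :
    listDistChromNum (bookGraph n) = distChromNum (bookGraph n) := by
  classical
  have hLD : ∀ k, ProperlyListDistinguishable (bookGraph n) k →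
      k ∈ {r | ∃ f : (Fin 1 ⊕ Fin n) × Fin 2 → Fin r,
        (∀ ⦃u w : (Fin 1 ⊕ Fin n) × Fin 2⦄, (bookGraph n).Adj u w → f u ≠ f w) ∧
        ∀ φ : bookGraph n ≃g bookGraph n, (∀ v, f (φ v) = f v) → ∀ v, φ v = v} := by
    intro k h
    obtain ⟨f, hmem, hp, hd⟩ := h (fun _ => Finset.range k) (fun _ => Finset.card_range k)
    refine ⟨fun v => ⟨f v, Finset.mem_range.mp (hmem v)⟩, ?_, ?_⟩
    · intro u w hadj h'
      exact hp hadj (congrArg Fin.val h')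
    · intro φ hφ
      exact hd φ (fun v => congrArg Fin.val (hφ v))
  have hstart : ProperlyListDistinguishable (bookGraph n) (n + 1) := by
    refine construct hn (by omega) ?_
    have e1 : n + 1 - 1 = n := by omega
    have e2 : n + 1 - 2 = n - 1 := by omega
    rw [e1, e2]
    have : n * 1 ≤ n * (n - 1) := Nat.mul_le_mul_left n (by omega)
    omega
  unfold listDistChromNum distChromNum
  have hDSne : {r | ∃ f : (Fin 1 ⊕ Fin n) × Fin 2 → Fin r,
      (∀ ⦃u w : (Fin 1 ⊕ Fin n) × Fin 2⦄, (bookGraph n).Adj u w → f u ≠ f w) ∧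
      ∀ φ : bookGraph n ≃g bookGraph n, (∀ v, f (φ v) = f v) → ∀ v, φ v = v}.Nonempty :=
    ⟨n + 1, hLD _ hstart⟩
  have h1 := Nat.sInf_mem hDSne
  obtain ⟨f, hp, hd⟩ := h1
  obtain ⟨hb1, hb2⟩ := dist_bounds hn f hp hd
  have h2 : ProperlyListDistinguishable (bookGraph n)
      (sInf {r | ∃ f : (Fin 1 ⊕ Fin n) × Fin 2 → Fin r,
        (∀ ⦃u w : (Fin 1 ⊕ Fin n) × Fin 2⦄, (bookGraph n).Adj u w → f u ≠ f w) ∧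
        ∀ φ : bookGraph n ≃g bookGraph n, (∀ v, f (φ v) = f v) → ∀ v, φ v = v}) :=
    construct hn hb1 hb2
  have hLSne : {k | ProperlyListDistinguishable (bookGraph n) k}.Nonempty := ⟨_, h2⟩
  have h3 := Nat.sInf_le (s := {k | ProperlyListDistinguishable (bookGraph n) k}) h2
  have h4 : ProperlyListDistinguishable (bookGraph n)
      (sInf {k | ProperlyListDistinguishable (bookGraph n) k}) := Nat.sInf_mem hLSne
  have h5 := Nat.sInf_le (hLD _ h4)
  exact le_antisymm h3 h5
end
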